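/- Define V_k(β) = ∫_{[0,1]^k} e(β t_1^d ⋯ t_k^d) dt, where e(α) = exp(2πiα) and d ≥ 1 is a fixed integer. Then for every k ≥ 1 there is a constant C = C(k,d) such that for all real β with |β| ≥ 1, one has |V_k(β)| ≤ C |β|^{-1/d} (1 + log|β|)^{k-1}. -/

import Mathlib

/-!
Split `[0, 1]` at `δ = |β| ^ (-1/d)`; the piece `[0, δ]` contributes at most `δ`.
For `k = 1`, on `[δ, 1]` write `e(β x^d) = x^(1-d) · (x^(d-1) e(β x^d))` and integrate by parts:
the weight `x^(1-d)` is decreasing, so the integral is `O(δ^(1-d) / |β|) = O(δ)`.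
For `k + 1`, use `V_{k+1}(β) = ∫₀¹ V_k(β t^d) dt`. For `t ≥ δ` we have `|β t^d| ≥ 1`, and the
bound for `V_k` at `β t^d` is the bound at `β` times `1/t`; integrating `1/t` over `[δ, 1]`
gives `log|β| / d`, the extra logarithmic factor.
-/

open MeasureTheory Set Real

/-- `e(α) = exp(2πiα)`. -/
noncomputable def eTwoPi (x : ℝ) : ℂ := Complex.exp (2 * Real.pi * Complex.I * x)

@[fun_prop]
theorem continuous_eTwoPi : Continuous eTwoPi := by
  unfold eTwoPi; fun_prop

@[simp]
theorem norm_eTwoPi (x : ℝ) : ‖eTwoPi x‖ = 1 := by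
  rw [eTwoPi, Complex.norm_exp]
  simp [mul_comm _ Complex.I]

theorem HasDerivAt.eTwoPi {φ : ℝ → ℝ} {φ' x : ℝ} (h : HasDerivAt φ φ' x) :
    HasDerivAt (fun y => eTwoPi (φ y)) (2 * π * Complex.I * φ' * eTwoPi (φ x)) x := by
  have := (h.ofReal_comp.const_mul (2 * π * Complex.I)).cexp
  unfold _root_.eTwoPi
  convert this using 1
  ring

theorem norm_integral_smul_deriv_le {E : Type*} [NormedAddCommGroup E] [NormedSpace ℝ E]
    [CompleteSpace E] {a b M : ℝ} {u u' : ℝ → ℝ} {v v' : ℝ → E} (hab : a ≤ b)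
    (hu : ∀ x ∈ Icc a b, HasDerivAt u (u' x) x) (hv : ∀ x ∈ Icc a b, HasDerivAt v (v' x) x)
    (hu'int : IntervalIntegrable u' volume a b) (hv'int : IntervalIntegrable v' volume a b)
    (hu' : ∀ x ∈ Icc a b, u' x ≤ 0) (hub : 0 ≤ u b) (hvM : ∀ x ∈ Icc a b, ‖v x‖ ≤ M) :
    ‖∫ x in a..b, u x • v' x‖ ≤ 2 * M * u a := by
  rw [← uIcc_of_le hab] at hu hv
  have hdrop : ∫ x in a..b, -u' x = u a - u b := by
    rw [intervalIntegral.integral_neg, intervalIntegral.integral_eq_sub_of_hasDerivAt hu hu'int,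
      neg_sub]
  have hua : u b ≤ u a := by
    have : 0 ≤ ∫ x in a..b, -u' x :=
      intervalIntegral.integral_nonneg hab fun x hx => neg_nonneg.2 (hu' x hx)
    linarith
  have hrest : ‖∫ x in a..b, u' x • v x‖ ≤ M * (u a - u b) := by
    rw [← hdrop, ← intervalIntegral.integral_const_mul]
    refine intervalIntegral.norm_integral_le_of_norm_le hab (ae_of_all _ fun x hx => ?_)
      (hu'int.neg.const_mul M)
    replace hx := Ioc_subset_Icc_self hx
    rw [norm_smul, Real.norm_eq_abs, abs_of_nonpos (hu' x hx), mul_comm]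
    exact mul_le_mul_of_nonneg_right (hvM x hx) (neg_nonneg.2 (hu' x hx))
  have hend : ∀ x ∈ Icc a b, 0 ≤ u x → ‖u x • v x‖ ≤ u x * M := fun x hx hx0 => by
    rw [norm_smul, Real.norm_of_nonneg hx0]
    exact mul_le_mul_of_nonneg_left (hvM x hx) hx0
  rw [intervalIntegral.integral_smul_deriv_eq_deriv_smul hu hv hu'int hv'int]
  calc ‖u b • v b - u a • v a - ∫ x in a..b, u' x • v x‖
      ≤ ‖u b • v b‖ + ‖u a • v a‖ + ‖∫ x in a..b, u' x • v x‖ :=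
        norm_sub_le_of_le (norm_sub_le _ _) le_rfl
    _ ≤ u b * M + u a * M + M * (u a - u b) := by
        gcongr
        exacts [hend b (right_mem_Icc.2 hab) hub, hend a (left_mem_Icc.2 hab) (hub.trans hua)]
    _ = 2 * M * u a := by ring

theorem norm_integral_zero_one_le {E : Type*} [NormedAddCommGroup E] [NormedSpace ℝ E]
    {f : ℝ → E} (hf : Continuous f) (hf1 : ∀ x, ‖f x‖ ≤ 1) {δ : ℝ} (hδ : 0 ≤ δ) :
    ‖∫ x in (0 : ℝ)..1, f x‖ ≤ δ + ‖∫ x in δ..1, f x‖ := by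
  rw [← intervalIntegral.integral_add_adjacent_intervals (hf.intervalIntegrable 0 δ)
    (hf.intervalIntegrable δ 1)]
  refine (norm_add_le _ _).trans (add_le_add_left ?_ _)
  simpa [abs_of_nonneg hδ] using
    intervalIntegral.norm_integral_le_of_norm_le_const (a := 0) (b := δ) fun x _ => hf1 x

theorem rpow_neg_one_div_mem_Ioc {b : ℝ} (hb : 1 ≤ b) (d : ℕ) : b ^ (-(1 : ℝ) / d) ∈ Ioc 0 1 :=
  ⟨rpow_pos_of_pos (one_pos.trans_le hb) _, rpow_le_one_of_one_le_of_nonpos hb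
    (div_nonpos_of_nonpos_of_nonneg (by norm_num) d.cast_nonneg)⟩

theorem rpow_neg_one_div_pow {b : ℝ} (hb : 0 ≤ b) {d : ℕ} (hd : d ≠ 0) :
    (b ^ (-(1 : ℝ) / d)) ^ d = b⁻¹ := by
  rw [neg_div, rpow_neg hb, inv_pow, one_div, rpow_inv_natCast_pow hb hd]

theorem mul_pow_rpow_neg_one_div {b t : ℝ} (hb : 0 ≤ b) (ht : 0 < t) {d : ℕ} (hd : d ≠ 0) :
    (b * t ^ d) ^ (-(1 : ℝ) / d) = b ^ (-(1 : ℝ) / d) * t⁻¹ := by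
  rw [mul_rpow hb (by positivity), ← rpow_natCast, ← rpow_mul ht.le,
    mul_div_cancel₀ _ (Nat.cast_ne_zero.2 hd), rpow_neg_one]

theorem one_le_abs_mul_pow {d : ℕ} (hd : d ≠ 0) {β t : ℝ} (hβ : 1 ≤ |β|)
    (ht : |β| ^ (-(1 : ℝ) / d) ≤ t) : 1 ≤ |β * t ^ d| := by
  have hβ0 : 0 < |β| := one_pos.trans_le hβ
  calc (1 : ℝ) = |β| * (|β| ^ (-(1 : ℝ) / d)) ^ d := by
        rw [rpow_neg_one_div_pow hβ0.le hd, mul_inv_cancel₀ hβ0.ne']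
    _ ≤ |β| * |t| ^ d := by gcongr; exact ht.trans (le_abs_self t)
    _ = |β * t ^ d| := by rw [abs_mul, abs_pow]

theorem rpow_mul_one_add_log_pow_le {d : ℕ} (hd : d ≠ 0) (n : ℕ) {β t : ℝ} (hβ : 1 ≤ |β|)
    (ht : |β| ^ (-(1 : ℝ) / d) ≤ t) (ht1 : t ≤ 1) :
    |β * t ^ d| ^ (-(1 : ℝ) / d) * (1 + log |β * t ^ d|) ^ n ≤
      |β| ^ (-(1 : ℝ) / d) * (1 + log |β|) ^ n * t⁻¹ := by
  have hβ0 : 0 < |β| := one_pos.trans_le hβ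
  have ht0 : 0 < t := (rpow_pos_of_pos hβ0 _).trans_le ht
  have hlog : log |β * t ^ d| ≤ log |β| := by
    rw [abs_mul, abs_pow, abs_of_pos ht0, log_mul hβ0.ne' (by positivity)]
    linarith [log_nonpos (pow_nonneg ht0.le d) (pow_le_one₀ ht0.le ht1)]
  have hscale : |β * t ^ d| ^ (-(1 : ℝ) / d) = |β| ^ (-(1 : ℝ) / d) * t⁻¹ := by
    rw [abs_mul, abs_pow, abs_of_pos ht0, mul_pow_rpow_neg_one_div hβ0.le ht0 hd]
  have hlog0 := log_nonneg (one_le_abs_mul_pow hd hβ ht)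
  rw [hscale, mul_right_comm]
  gcongr

theorem norm_integral_eTwoPi_mul_pow_le (m : ℕ) {β δ : ℝ} (hβ : β ≠ 0) (hδ : 0 < δ) (hδ1 : δ ≤ 1) :
    ‖∫ x in δ..1, eTwoPi (β * x ^ (m + 1))‖ ≤ (π * |β| * (m + 1) * δ ^ m)⁻¹ := by
  set K : ℂ := 2 * π * Complex.I * β * (m + 1)
  have hK : K ≠ 0 := by simp [K, pi_ne_zero, hβ, Nat.cast_add_one_ne_zero]
  have hnormK : ‖K‖ = 2 * π * |β| * (m + 1) := by
    have : ‖(m : ℂ) + 1‖ = m + 1 := by exact_mod_cast Complex.norm_natCast (m + 1)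
    simp [K, abs_of_pos pi_pos, this]
  have hpos : ∀ x ∈ Icc δ 1, 0 < x := fun x hx => hδ.trans_le hx.1
  have hu : ∀ x ∈ Icc δ 1, HasDerivAt (fun y : ℝ => y ^ (-(m : ℤ)))
      (-m * x ^ (-(m : ℤ) - 1)) x := fun x hx => by
    simpa using hasDerivAt_zpow (-(m : ℤ)) x (Or.inl (hpos x hx).ne')
  have hv : ∀ x ∈ Icc δ 1, HasDerivAt (fun y => K⁻¹ * eTwoPi (β * y ^ (m + 1)))
      ((x : ℂ) ^ m * eTwoPi (β * x ^ (m + 1))) x := fun x _ => by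
    have := (((hasDerivAt_pow (m + 1) x).const_mul β).eTwoPi).const_mul K⁻¹
    refine this.congr_deriv ?_
    rw [Nat.add_sub_cancel, eq_comm, eq_inv_mul_iff_mul_eq₀ hK]
    push_cast
    ring
  have hu'int : IntervalIntegrable (fun x : ℝ => -m * x ^ (-(m : ℤ) - 1)) volume δ 1 :=
    (continuousOn_const.mul ((continuousOn_zpow₀ _).mono fun x hx =>
      (hpos x (by rwa [uIcc_of_le hδ1] at hx)).ne')).intervalIntegrable
  have hv'int : IntervalIntegrable (fun x : ℝ => (x : ℂ) ^ m * eTwoPi (β * x ^ (m + 1)))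
      volume δ 1 :=
    (by fun_prop : Continuous _).intervalIntegrable _ _
  have hsmul : ∀ x ∈ uIcc δ 1,
      x ^ (-(m : ℤ)) • ((x : ℂ) ^ m * eTwoPi (β * x ^ (m + 1))) = eTwoPi (β * x ^ (m + 1)) := by
    intro x hx
    rw [uIcc_of_le hδ1] at hx
    have : (x : ℂ) ≠ 0 := Complex.ofReal_ne_zero.2 (hpos x hx).ne'
    rw [Complex.real_smul, Complex.ofReal_zpow, zpow_neg, zpow_natCast,
      inv_mul_cancel_left₀ (pow_ne_zero _ this)]
  have hu'nonpos : ∀ x ∈ Icc δ 1, -(m : ℝ) * x ^ (-(m : ℤ) - 1) ≤ 0 := fun x hx =>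
    mul_nonpos_of_nonpos_of_nonneg (by simp) (zpow_nonneg (hpos x hx).le _)
  have hvM : ∀ x ∈ Icc δ 1, ‖K⁻¹ * eTwoPi (β * x ^ (m + 1))‖ ≤ (2 * π * |β| * (m + 1))⁻¹ :=
    fun x _ => by simp [hnormK]
  rw [← intervalIntegral.integral_congr hsmul]
  refine (norm_integral_smul_deriv_le hδ1 hu hv hu'int hv'int hu'nonpos (by simp) hvM).trans_eq ?_
  rw [zpow_neg, zpow_natCast]
  field_simp

noncomputable def V (d k : ℕ) (β : ℝ) : ℂ :=
  ∫ t : Fin k → ℝ in Icc 0 1, eTwoPi (β * ∏ i, t i ^ d)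

theorem norm_V_le_one (d k : ℕ) (β : ℝ) : ‖V d k β‖ ≤ 1 := by
  have h := norm_setIntegral_le_of_norm_le_const (C := 1) (measure_Icc_lt_top (μ := volume)
    (a := (0 : Fin k → ℝ)) (b := 1)) fun t _ => (norm_eTwoPi (β * ∏ i, t i ^ d)).le
  simpa [V, Real.volume_Icc_pi, measureReal_def] using h

theorem continuous_V (d k : ℕ) : Continuous (V d k) :=
  continuous_parametric_integral_of_continuous
    (f := fun β (t : Fin k → ℝ) => eTwoPi (β * ∏ i, t i ^ d))
    (continuous_eTwoPi.comp (by fun_prop)) isCompact_Icc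

theorem V_zero (d : ℕ) (β : ℝ) : V d 0 β = eTwoPi β := by
  simp [V, measureReal_def, Real.volume_Icc_pi]

theorem V_succ (d k : ℕ) (β : ℝ) : V d (k + 1) β = ∫ x in (0 : ℝ)..1, V d k (β * x ^ d) := by
  set e := (MeasurableEquiv.piFinSuccAbove (fun _ : Fin (k + 1) => ℝ) 0).symm
  have he : MeasurePreserving e := (volume_preserving_piFinSuccAbove (fun _ => ℝ) 0).symm _
  have hIcc : e ⁻¹' Icc 0 1 = Icc 0 1 ×ˢ Icc 0 1 :=
    ((Fin.insertNthOrderIso (fun _ => ℝ) 0).preimage_Icc _ _).trans (Icc_prod_eq _ _)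
  have hprod : ∀ p : ℝ × (Fin k → ℝ), ∏ i, e p i ^ d = p.1 ^ d * ∏ i, p.2 i ^ d := fun p => by
    simp [e, MeasurableEquiv.piFinSuccAbove_symm_apply, Fin.insertNthEquiv, Fin.prod_univ_succ]
  have hcont : Continuous fun p : ℝ × (Fin k → ℝ) => eTwoPi (β * (p.1 ^ d * ∏ i, p.2 i ^ d)) :=
    continuous_eTwoPi.comp (by fun_prop)
  rw [V, ← he.map_eq, setIntegral_map_equiv, hIcc, Measure.volume_eq_prod]
  simp only [hprod]
  rw [setIntegral_prod _
      (hcont.continuousOn.integrableOn_compact (isCompact_Icc.prod isCompact_Icc)),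
    intervalIntegral.integral_of_le zero_le_one, ← integral_Icc_eq_integral_Ioc]
  simp only [V, mul_assoc]

theorem norm_V_one_le {d : ℕ} (hd : d ≠ 0) {β : ℝ} (hβ : 1 ≤ |β|) :
    ‖V d 1 β‖ ≤ 2 * |β| ^ (-(1 : ℝ) / d) := by
  obtain ⟨m, rfl⟩ := Nat.exists_eq_succ_of_ne_zero hd
  set δ := |β| ^ (-(1 : ℝ) / (m + 1 : ℕ))
  have hβ0 : 0 < |β| := one_pos.trans_le hβ
  obtain ⟨hδ, hδ1⟩ := rpow_neg_one_div_mem_Ioc hβ (m + 1)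
  have hδd : δ ^ (m + 1) = |β|⁻¹ := rpow_neg_one_div_pow hβ0.le hd
  have htail : (π * |β| * (m + 1) * δ ^ m)⁻¹ ≤ δ := by
    rw [inv_le_iff_one_le_mul₀' (by positivity)]
    calc (1 : ℝ) ≤ π * (m + 1) := by nlinarith [pi_gt_three, (Nat.cast_nonneg m : (0 : ℝ) ≤ m)]
      _ = π * |β| * (m + 1) * δ ^ m * δ := by
        rw [show π * |β| * (m + 1) * δ ^ m * δ = π * (m + 1) * (|β| * δ ^ (m + 1)) by ring,
          hδd, mul_inv_cancel₀ hβ0.ne', mul_one]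
  rw [V_succ]
  simp only [V_zero]
  calc ‖∫ x in (0 : ℝ)..1, eTwoPi (β * x ^ (m + 1))‖
      ≤ δ + ‖∫ x in δ..1, eTwoPi (β * x ^ (m + 1))‖ :=
        norm_integral_zero_one_le (by fun_prop) (fun x => (norm_eTwoPi _).le) hδ.le
    _ ≤ δ + δ := by
        gcongr
        exact (norm_integral_eTwoPi_mul_pow_le m (abs_pos.1 hβ0) hδ hδ1).trans htail
    _ = 2 * δ := by ring

theorem norm_V_succ_le {d k n : ℕ} (hd : d ≠ 0) {C : ℝ} (hC : 0 ≤ C)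
    (hV : ∀ β : ℝ, 1 ≤ |β| → ‖V d k β‖ ≤ C * |β| ^ (-(1 : ℝ) / d) * (1 + log |β|) ^ n)
    {β : ℝ} (hβ : 1 ≤ |β|) :
    ‖V d (k + 1) β‖ ≤ (1 + C) * |β| ^ (-(1 : ℝ) / d) * (1 + log |β|) ^ (n + 1) := by
  set δ := |β| ^ (-(1 : ℝ) / d)
  set L := log |β|
  have hβ0 : 0 < |β| := one_pos.trans_le hβ
  obtain ⟨hδ, hδ1⟩ := rpow_neg_one_div_mem_Ioc hβ d
  have hL : 0 ≤ L := log_nonneg hβ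
  have hlogδ : log δ⁻¹ ≤ L := by
    rw [log_inv, log_rpow hβ0, neg_div, neg_mul, neg_neg, one_div]
    exact mul_le_of_le_one_left hL
      (inv_le_one_of_one_le₀ (by exact_mod_cast Nat.one_le_iff_ne_zero.2 hd))
  set A := C * δ * (1 + L) ^ n with hA
  have hpoint : ∀ t ∈ Ioc δ 1, ‖V d k (β * t ^ d)‖ ≤ A * t⁻¹ := fun t ht =>
    calc ‖V d k (β * t ^ d)‖
        ≤ C * (|β * t ^ d| ^ (-(1 : ℝ) / d) * (1 + log |β * t ^ d|) ^ n) := by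
          rw [← mul_assoc]; exact hV _ (one_le_abs_mul_pow hd hβ ht.1.le)
      _ ≤ C * (δ * (1 + L) ^ n * t⁻¹) :=
          mul_le_mul_of_nonneg_left (rpow_mul_one_add_log_pow_le hd n hβ ht.1.le ht.2) hC
      _ = A * t⁻¹ := by rw [hA]; ring
  have htail : ‖∫ t in δ..1, V d k (β * t ^ d)‖ ≤ A * L :=
    calc ‖∫ t in δ..1, V d k (β * t ^ d)‖ ≤ ∫ t in δ..1, A * t⁻¹ :=
          intervalIntegral.norm_integral_le_of_norm_le hδ1 (ae_of_all _ hpoint)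
            ((intervalIntegrable_inv_iff.2 (Or.inr (notMem_uIcc_of_lt hδ one_pos))).const_mul A)
      _ = A * log δ⁻¹ := by
        rw [intervalIntegral.integral_const_mul, integral_inv_of_pos hδ one_pos, one_div]
      _ ≤ A * L := by gcongr
  rw [V_succ]
  calc ‖∫ t in (0 : ℝ)..1, V d k (β * t ^ d)‖
      ≤ δ + ‖∫ t in δ..1, V d k (β * t ^ d)‖ :=
        norm_integral_zero_one_le ((continuous_V d k).comp (by fun_prop))
          (fun _ => norm_V_le_one d k _) hδ.le
    _ ≤ δ * (1 + L) ^ (n + 1) + A * (1 + L) :=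
        add_le_add (le_mul_of_one_le_right hδ.le (one_le_pow₀ (by linarith)))
          (htail.trans (by gcongr; linarith))
    _ = (1 + C) * δ * (1 + L) ^ (n + 1) := by ring

theorem exists_norm_V_le {d : ℕ} (hd : d ≠ 0) (n : ℕ) :
    ∃ C : ℝ, 0 ≤ C ∧ ∀ β : ℝ, 1 ≤ |β| →
      ‖V d (n + 1) β‖ ≤ C * |β| ^ (-(1 : ℝ) / d) * (1 + log |β|) ^ n := by
  induction n with
  | zero => exact ⟨2, zero_le_two, fun β hβ => by simpa using norm_V_one_le hd hβ⟩
  | succ n ih =>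
    obtain ⟨C, hC, hV⟩ := ih
    exact ⟨1 + C, by positivity, fun β hβ => norm_V_succ_le hd hC hV hβ⟩

/-- With `V_k(β) = ∫_{[0,1]^k} e(β t₁^d⋯t_k^d) dt`, for every `k ≥ 1` there is `C` with
`|V_k(β)| ≤ C |β|^{-1/d} (1+log|β|)^{k-1}` for all `|β| ≥ 1`. -/
theorem stmt_4 (d : ℕ) (hd : 1 ≤ d) (k : ℕ) (hk : 1 ≤ k) :
    ∃ C : ℝ, ∀ β : ℝ, 1 ≤ |β| →
      ‖∫ t : Fin k → ℝ in Set.Icc 0 1, eTwoPi (β * ∏ i, (t i) ^ d)‖ ≤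
        C * |β| ^ (-(1 : ℝ) / d) * (1 + Real.log |β|) ^ (k - 1) := by
  obtain ⟨n, rfl⟩ := Nat.exists_eq_add_of_le' hk
  obtain ⟨C, -, hC⟩ := exists_norm_V_le (Nat.one_le_iff_ne_zero.1 hd) n
  exact ⟨C, hC⟩
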